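/- For all integers N and r with 2 ≤ r ≤ N, a_{0,r}(N+1,x) = (x)_r · (−1)^{N−r+1} · N! · H_{N,r−1}. -/

import Mathlib

open Finset

/-- Generalized harmonic numbers `H_{N,j}`: `H_{N,0} = 1`,
`H_{N,1} = 1 + 1/2 + ⋯ + 1/N`, and `H_{N,j} = ∑_{l=j}^{N} H_{l-1,j-1}/l` for `j ≥ 2`. -/
def genHarmonic : ℕ → ℕ → ℚ
  | _, 0 => 1
  | N, 1 => ∑ i ∈ Finset.range N, (1 : ℚ) / (i + 1)
  | N, (j+2) => ∑ l ∈ Finset.Icc (j+2) N, genHarmonic (l-1) (j+1) / l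
termination_by N j => j

/-- Falling factorial `(x)_n = x(x-1)⋯(x-n+1)`, with `(x)_0 = 1`. -/
noncomputable def fallingFactorial (x : ℝ) (n : ℕ) : ℝ := ∏ i ∈ Finset.range n, (x - i)

/-- The coefficients `a_{i,j}(N, x)` arising from repeated differentiation of the
λ-Changhee generating function: `a_{0,0}(N,x) = 0`, `a_{1,0}(1,x) = -1`, `a_{0,1}(1,x) = x`,
and for `N ≥ 1`, `i, j ≥ 0` with `1 ≤ i + j ≤ N + 1`,
`a_{i,j}(N+1,x) = -N·a_{i,j}(N,x) - i·a_{i-1,j}(N,x) + (x - j + 1)·a_{i,j-1}(N,x)`,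
with the convention that `a_{i,j}(N,x) = 0` whenever `i < 0`, `j < 0`, or `i + j > N`. -/
noncomputable def aCh : ℕ → ℤ → ℤ → ℝ → ℝ
  | 0, _, _, _ => 0
  | 1, i, j, x => if i = 1 ∧ j = 0 then -1 else if i = 0 ∧ j = 1 then x else 0
  | (N+2), i, j, x =>
      if 0 ≤ i ∧ 0 ≤ j ∧ 1 ≤ i + j ∧ i + j ≤ N + 2 then
        -(N+1 : ℝ) * aCh (N+1) i j x - (i : ℝ) * aCh (N+1) (i-1) j x
          + (x - (j : ℝ) + 1) * aCh (N+1) i (j-1) x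
      else 0

/-
For `i = 0` the defining recursion reads
`a_{0,r}(N+2) = -(N+1)·a_{0,r}(N+1) + (x-r+1)·a_{0,r-1}(N+1)`, while
`H_{N+1,j} = H_{N,j} + H_{N,j-1}/(N+1)`. Writing the sign as `(-1)^(N+r-1)` and using that both
`a_{0,r}(N+1)` and `H_{N,r-1}` vanish for `r > N+1`, the closed form
`a_{0,r}(N+1) = (-1)^(N+r-1)·(x)_r·N!·H_{N,r-1}` holds for every `r ≥ 1` and follows by a
single induction on `N`, with no separate diagonal case.
-/

theorem genHarmonic_eq_zero_of_lt {N j : ℕ} (h : N < j) : genHarmonic N j = 0 := by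
  match j, h with
  | 1, h => simp [genHarmonic, Nat.lt_one_iff.mp h]
  | k + 2, h => rw [genHarmonic, Icc_eq_empty (by omega), sum_empty]

theorem genHarmonic_succ (N j : ℕ) :
    genHarmonic (N + 1) (j + 1) = genHarmonic N (j + 1) + genHarmonic N j / (N + 1) := by
  match j with
  | 0 => rw [genHarmonic, genHarmonic, genHarmonic, sum_range_succ]
  | k + 1 =>
    by_cases hk : k + 2 ≤ N + 1
    · rw [genHarmonic, genHarmonic, sum_Icc_succ_top hk]
      push_cast
      ring
    · rw [genHarmonic_eq_zero_of_lt (by omega), genHarmonic_eq_zero_of_lt (by omega),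
        genHarmonic_eq_zero_of_lt (by omega)]
      simp

theorem fallingFactorial_succ (x : ℝ) (n : ℕ) :
    fallingFactorial x (n + 1) = fallingFactorial x n * (x - n) :=
  prod_range_succ _ _

theorem aCh_eq_zero_of_lt {N : ℕ} {i j : ℤ} (h : (N : ℤ) < i + j) (x : ℝ) :
    aCh N i j x = 0 := by
  match N with
  | 0 => rfl
  | 1 => simp only [aCh]; split_ifs <;> first | omega | rfl
  | N + 2 => simp only [aCh]; rw [if_neg (by omega)]

theorem aCh_zero_zero (N : ℕ) (x : ℝ) : aCh N 0 0 x = 0 := by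
  match N with
  | 0 => rfl
  | 1 => simp [aCh]
  | N + 2 => simp only [aCh]; rw [if_neg (by omega)]

theorem aCh_succ_succ_zero (N : ℕ) {j : ℤ} (hj : 1 ≤ j) (x : ℝ) :
    aCh (N + 2) 0 j x
      = -(N + 1 : ℝ) * aCh (N + 1) 0 j x + (x - j + 1) * aCh (N + 1) 0 (j - 1) x := by
  by_cases hjN : j ≤ N + 2
  · simp only [aCh]
    rw [if_pos (by omega)]
    simp
  · simp only [aCh]
    rw [if_neg (by omega), aCh_eq_zero_of_lt (by push_cast; omega),
      aCh_eq_zero_of_lt (by push_cast; omega)]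
    ring

theorem aCh_zero_succ (N s : ℕ) (x : ℝ) :
    aCh (N + 1) 0 ((s : ℤ) + 1) x
      = (-1 : ℝ) ^ (N + s) * fallingFactorial x (s + 1) * N.factorial * genHarmonic N s := by
  induction N generalizing s with
  | zero =>
    rcases s with _ | t
    · simp [aCh, fallingFactorial, genHarmonic]
    · rw [aCh_eq_zero_of_lt (by push_cast; omega), genHarmonic_eq_zero_of_lt (by omega)]
      simp
  | succ N ih =>
    rw [aCh_succ_succ_zero N (by omega)]
    rcases s with _ | t
    · rw [show ((0 : ℕ) : ℤ) + 1 - 1 = 0 by simp, aCh_zero_zero, ih, genHarmonic, genHarmonic,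
        Nat.factorial_succ]
      push_cast
      ring
    · rw [show ((t + 1 : ℕ) : ℤ) + 1 - 1 = (t : ℤ) + 1 by push_cast; ring, ih, ih,
        genHarmonic_succ, fallingFactorial_succ x (t + 1), Nat.factorial_succ]
      push_cast
      field_simp
      ring

/-- For `2 ≤ r ≤ N`, `a_{0,r}(N+1,x) = (x)_r · (-1)^{N-r+1} · N! · H_{N,r-1}`. -/
theorem aCh_zero_r (N r : ℕ) (hr1 : 2 ≤ r) (hr2 : r ≤ N) (x : ℝ) :
    aCh (N + 1) 0 (r : ℤ) x
      = fallingFactorial x r * (-1 : ℝ) ^ (N - r + 1) * (Nat.factorial N : ℝ) *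
          (genHarmonic N (r - 1) : ℝ) := by
  obtain ⟨s, rfl⟩ : ∃ s, r = s + 1 := ⟨r - 1, by omega⟩
  have hsign : (-1 : ℝ) ^ (N + s) = (-1) ^ (N - (s + 1) + 1) := by
    rw [show N + s = (N - (s + 1) + 1) + 2 * s by omega, pow_add, pow_mul]
    simp
  push_cast
  rw [aCh_zero_succ, hsign]
  ring
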